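/- arXiv:1404.0239 — 2 statements merged into one kernel-verified Lean document; each statement's English description precedes it below -/
import Mathlib

section
/- Let a₁, a₂ : [0,T] → ℝ be continuous driving functions, let g_{1,t}(z), g_{2,t}(z) be the solutions of the chordal Loewner equations ∂_t g_{i,t}(z) = 2/(g_{i,t}(z) − a_i(t)) with g_{i,0}(z) = z, and suppose there is c > 0 such that |g_{i,t}(z) − a_i(t)| ≥ c for all t ∈ [0,T] and i = 1, 2. Then |g_{1,t}(z) − g_{2,t}(z)| ≤ (e^{2t/c²} − 1) · sup_{s∈[0,t]} |a₁(s) − a₂(s)| for all t ∈ [0,T]. -/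
/-! The difference `g₁ - g₂` vanishes at time `0`, and since `w ↦ 2 / (w - a)` is
`2 / c²`-Lipschitz jointly in `(w, a)` on the region `‖w - a‖ ≥ c`, its derivative is bounded by
`2 / c² * (‖g₁ - g₂‖ + sup |a₁ - a₂|)`. Gronwall's inequality with zero initial value turns this
linear differential inequality into the bound `(e^{2t/c²} - 1) * sup |a₁ - a₂|`. -/

open Set

theorem norm_inv_sub_inv_le_of_le_norm {𝕜 : Type*} [NormedField 𝕜] {x y : 𝕜} {c : ℝ}
    (hc : 0 < c) (hx : c ≤ ‖x‖) (hy : c ≤ ‖y‖) :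
    ‖x⁻¹ - y⁻¹‖ ≤ ‖x - y‖ / c ^ 2 := by
  have hx0 : x ≠ 0 := norm_pos_iff.mp (hc.trans_le hx)
  have hy0 : y ≠ 0 := norm_pos_iff.mp (hc.trans_le hy)
  have hxy : c ^ 2 ≤ ‖x * y‖ := by
    rw [sq, norm_mul]
    exact mul_le_mul hx hy hc.le (norm_nonneg x)
  rw [inv_sub_inv hx0 hy0, norm_div, norm_sub_rev]
  gcongr

theorem norm_two_div_sub_sub_two_div_sub_le {w₁ w₂ : ℂ} {b₁ b₂ c : ℝ} (hc : 0 < c)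
    (h₁ : c ≤ ‖w₁ - b₁‖) (h₂ : c ≤ ‖w₂ - b₂‖) :
    ‖2 / (w₁ - b₁) - 2 / (w₂ - b₂)‖ ≤ 2 / c ^ 2 * (‖w₁ - w₂‖ + |b₁ - b₂|) := by
  have hdrivers : ‖(w₁ - b₁) - (w₂ - b₂)‖ ≤ ‖w₁ - w₂‖ + |b₁ - b₂| := by
    calc ‖(w₁ - b₁) - (w₂ - b₂)‖ = ‖(w₁ - w₂) - ((b₁ - b₂ : ℝ) : ℂ)‖ := by
          push_cast; ring_nf
      _ ≤ ‖w₁ - w₂‖ + |b₁ - b₂| := by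
        simpa only [Complex.norm_real, Real.norm_eq_abs]
          using norm_sub_le (w₁ - w₂) ((b₁ - b₂ : ℝ) : ℂ)
  calc ‖2 / (w₁ - b₁) - 2 / (w₂ - b₂)‖ = 2 * ‖(w₁ - b₁)⁻¹ - (w₂ - b₂)⁻¹‖ := by
        rw [div_eq_mul_inv, div_eq_mul_inv, ← mul_sub, norm_mul, Complex.norm_two]
    _ ≤ 2 * (‖(w₁ - b₁) - (w₂ - b₂)‖ / c ^ 2) := by
        gcongr; exact norm_inv_sub_inv_le_of_le_norm hc h₁ h₂
    _ = 2 / c ^ 2 * ‖(w₁ - b₁) - (w₂ - b₂)‖ := by ring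
    _ ≤ 2 / c ^ 2 * (‖w₁ - w₂‖ + |b₁ - b₂|) := by gcongr

theorem norm_le_of_norm_deriv_le_mul_add {E : Type*} [NormedAddCommGroup E] [NormedSpace ℝ E]
    {f f' : ℝ → E} {K M t : ℝ} (hf : ContinuousOn f (Icc 0 t))
    (hf' : ∀ s ∈ Ico 0 t, HasDerivWithinAt f (f' s) (Ici s) s) (h0 : f 0 = 0)
    (bound : ∀ s ∈ Ico 0 t, ‖f' s‖ ≤ K * (‖f s‖ + M)) (ht : 0 ≤ t) :
    ‖f t‖ ≤ (Real.exp (K * t) - 1) * M := by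
  have hgronwall := norm_le_gronwallBound_of_norm_deriv_right_le (δ := 0) (ε := K * M) hf hf'
    (by rw [h0, norm_zero]) (fun s hs => (bound s hs).trans_eq (mul_add _ _ _)) t ⟨ht, le_rfl⟩
  rw [sub_zero] at hgronwall
  rcases eq_or_ne K 0 with rfl | hK
  · simpa [gronwallBound_K0] using hgronwall
  · rw [gronwallBound_of_K_ne_0 hK] at hgronwall
    dsimp only at hgronwall
    rwa [zero_mul, zero_add, mul_div_cancel_left₀ M hK,
      mul_comm M] at hgronwall

theorem loewner_lipschitz_in_driver_general (T : ℝ)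
    (a₁ a₂ : ℝ → ℝ)
    (ha₁ : ContinuousOn a₁ (Set.Icc 0 T)) (ha₂ : ContinuousOn a₂ (Set.Icc 0 T))
    (z : ℂ) (g₁ g₂ : ℝ → ℂ) (c : ℝ) (hc : 0 < c)
    (hg₁0 : g₁ 0 = z) (hg₂0 : g₂ 0 = z)
    (hd₁ : ∀ t ∈ Set.Icc (0 : ℝ) T, HasDerivAt g₁ (2 / (g₁ t - a₁ t)) t)
    (hd₂ : ∀ t ∈ Set.Icc (0 : ℝ) T, HasDerivAt g₂ (2 / (g₂ t - a₂ t)) t)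
    (hsep₁ : ∀ t ∈ Set.Icc (0 : ℝ) T, c ≤ ‖g₁ t - a₁ t‖)
    (hsep₂ : ∀ t ∈ Set.Icc (0 : ℝ) T, c ≤ ‖g₂ t - a₂ t‖) :
    ∀ t ∈ Set.Icc (0 : ℝ) T,
      ‖g₁ t - g₂ t‖
        ≤ (Real.exp (2 * t / c ^ 2) - 1)
            * sSup ((fun s => |a₁ s - a₂ s|) '' Set.Icc 0 t) := by
  intro t ht
  have hsub : Icc 0 t ⊆ Icc 0 T := Icc_subset_Icc_right ht.2
  have hdiff : ∀ s ∈ Icc 0 t, HasDerivAt (fun s => g₁ s - g₂ s)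
      (2 / (g₁ s - a₁ s) - 2 / (g₂ s - a₂ s)) s :=
    fun s hs => (hd₁ s (hsub hs)).sub (hd₂ s (hsub hs))
  have hle_sup : ∀ s ∈ Icc 0 t, |a₁ s - a₂ s| ≤ sSup ((fun s => |a₁ s - a₂ s|) '' Icc 0 t) :=
    fun s hs => le_csSup (isCompact_Icc.bddAbove_image
      ((ha₁.mono hsub).sub (ha₂.mono hsub)).abs) ⟨s, hs, rfl⟩
  rw [mul_div_right_comm]
  refine norm_le_of_norm_deriv_le_mul_add (fun s hs => (hdiff s hs).continuousAt.continuousWithinAt)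
    (fun s hs => (hdiff s (Ico_subset_Icc_self hs)).hasDerivWithinAt)
    (by rw [hg₁0, hg₂0, sub_self]) (fun s hs => ?_) ht.1
  have hs : s ∈ Icc 0 t := Ico_subset_Icc_self hs
  refine (norm_two_div_sub_sub_two_div_sub_le hc (hsep₁ s (hsub hs)) (hsep₂ s (hsub hs))).trans ?_
  gcongr
  exact hle_sup s hs

theorem loewner_lipschitz_in_driver (T : ℝ) (hT : 0 ≤ T)
    (a₁ a₂ : ℝ → ℝ)
    (ha₁ : ContinuousOn a₁ (Set.Icc 0 T)) (ha₂ : ContinuousOn a₂ (Set.Icc 0 T))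
    (z : ℂ) (g₁ g₂ : ℝ → ℂ) (c : ℝ) (hc : 0 < c)
    (hg₁0 : g₁ 0 = z) (hg₂0 : g₂ 0 = z)
    (hd₁ : ∀ t ∈ Set.Icc (0 : ℝ) T, HasDerivAt g₁ (2 / (g₁ t - a₁ t)) t)
    (hd₂ : ∀ t ∈ Set.Icc (0 : ℝ) T, HasDerivAt g₂ (2 / (g₂ t - a₂ t)) t)
    (hsep₁ : ∀ t ∈ Set.Icc (0 : ℝ) T, c ≤ ‖g₁ t - a₁ t‖)
    (hsep₂ : ∀ t ∈ Set.Icc (0 : ℝ) T, c ≤ ‖g₂ t - a₂ t‖) :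
    ∀ t ∈ Set.Icc (0 : ℝ) T,
      ‖g₁ t - g₂ t‖
        ≤ (Real.exp (2 * t / c ^ 2) - 1)
            * sSup ((fun s => |a₁ s - a₂ s|) '' Set.Icc 0 t) :=
  loewner_lipschitz_in_driver_general T a₁ a₂ ha₁ ha₂ z g₁ g₂ c hc hg₁0 hg₂0 hd₁ hd₂ hsep₁ hsep₂
end

section
/- Let b ∈ ℝ and let h : ℍ → ℝ be a bounded harmonic function on the open upper half-plane that extends continuously to ℝ \ {b} with h(x) = 1 for x > b and h(x) = 0 for x < b. Then h(z) = 1 − (1/π)·arg(z − b) for all z ∈ ℍ, where arg takes values in (0, π) on ℍ. -/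
open Complex Real

/-- The Laplacian of a function `f : ℂ → ℝ`, computed as the sum of the second
partial derivatives in the directions `1` and `I`. -/
noncomputable def laplacian (f : ℂ → ℝ) (z : ℂ) : ℝ :=
  fderiv ℝ (fun w => fderiv ℝ f w 1) z 1 + fderiv ℝ (fun w => fderiv ℝ f w Complex.I) z Complex.I

/-- A function is harmonic on a set if it is twice continuously differentiable there
and its Laplacian vanishes there. -/
def IsHarmonicOn (f : ℂ → ℝ) (s : Set ℂ) : Prop :=
  ContDiffOn ℝ 2 f s ∧ ∀ z ∈ s, laplacian f z = 0

/-!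
The difference `u` between `h` and `1 - arg (z - b) / π` is a bounded harmonic function on the
upper half-plane, continuous up to `ℝ \ {b}` and zero there; it suffices to show `u ≤ 0` (then
apply this to `-u`). On every ball in the half-plane `u = Re F` with `F` holomorphic. Apply the
maximum modulus principle on large rectangles `(b - S, b + S) × (δ, S)` to
`exp (t F z) * (z - b) / (z - b + I) ^ 3`: the rational factor kills the exceptional boundary point
`b` as well as infinity, so on the boundary the modulus is at most `exp (t η)` once `δ` is small,
which gives `u ≤ η + O(1 / t)`. Let `t → ∞`, then `η → 0`.
-/

open Set Metric
open scoped Laplacian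
open InnerProductSpace (HarmonicOnNhd)

theorem laplacian_eq_of_contDiffAt {f : ℂ → ℝ} {z : ℂ} (hf : ContDiffAt ℝ 2 f z) :
    laplacian f z = Δ f z := by
  have hdf : DifferentiableAt ℝ (fderiv ℝ f) z :=
    (hf.fderiv_right (m := 1) (by norm_num)).differentiableAt (by norm_num)
  simp [laplacian, InnerProductSpace.laplacian_eq_iteratedFDeriv_complexPlane,
    iteratedFDeriv_two_apply, fderiv_clm_apply hdf (differentiableAt_const _)]

theorem IsHarmonicOn.harmonicOnNhd {f : ℂ → ℝ} {s : Set ℂ} (hf : IsHarmonicOn f s)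
    (hs : IsOpen s) : HarmonicOnNhd f s := fun z hz ↦ by
  refine ⟨hf.1.contDiffAt (hs.mem_nhds hz), ?_⟩
  filter_upwards [hs.mem_nhds hz] with w hw
  rw [Pi.zero_apply, ← laplacian_eq_of_contDiffAt (hf.1.contDiffAt (hs.mem_nhds hw))]
  exact hf.2 w hw

theorem IsCompact.exists_ball_subset_upperHalfPlane {K : Set ℂ} (hK : IsCompact K)
    (hKU : K ⊆ {z | 0 < z.im}) : ∃ c r, K ⊆ ball c r ∧ ball c r ⊆ {z | 0 < z.im} := by
  rcases K.eq_empty_or_nonempty with rfl | hne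
  · exact ⟨0, 0, empty_subset _, by simp⟩
  obtain ⟨z₁, hz₁, hmin⟩ := hK.exists_isMinOn hne continuous_im.continuousOn
  obtain ⟨ρ, hρ⟩ := hK.isBounded.subset_closedBall 0
  set ε := z₁.im
  have hε : 0 < ε := hKU hz₁
  -- the ball centred at `R * I` with radius `R - ε / 2` stays above height `ε / 2`, and it
  -- contains `K` once `R * ε > 2 * ρ ^ 2`
  obtain ⟨R, hR, hRε⟩ : ∃ R : ℝ, 0 ≤ R ∧ R * ε = 2 * ρ ^ 2 + ε :=
    ⟨2 * ρ ^ 2 / ε + 1, by positivity, by field_simp⟩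
  refine ⟨R * I, R - ε / 2, fun z hz ↦ ?_, fun z hz ↦ ?_⟩
  · have hzρ : ‖z‖ ≤ ρ := by simpa using hρ hz
    have hre := abs_re_le_norm z
    have him : ε ≤ z.im := hmin hz
    have hre2 : z.re ^ 2 ≤ ρ ^ 2 := by nlinarith [abs_nonneg z.re, sq_abs z.re]
    have him2 : z.im ^ 2 ≤ ρ ^ 2 := by nlinarith [(im_le_norm z).trans hzρ]
    have hRim : R * ε ≤ R * z.im := mul_le_mul_of_nonneg_left him hR
    rw [mem_ball, dist_eq_re_im, Real.sqrt_lt' (by nlinarith)]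
    simp only [mul_re, mul_im, ofReal_re, ofReal_im, I_re, I_im, mul_zero, mul_one, sub_zero,
      add_zero]
    nlinarith
  · have := (abs_im_le_norm (z - R * I)).trans_lt (by rwa [← dist_eq_norm])
    simp only [sub_im, mul_im, ofReal_re, ofReal_im, I_re, I_im, mul_one, mul_zero,
      add_zero] at this
    show 0 < z.im
    linarith [(abs_lt.1 this).1]

theorem exists_differentiableOn_re_eq_of_harmonicOnNhd {u : ℂ → ℝ}
    (hu : HarmonicOnNhd u {z | 0 < z.im}) {K : Set ℂ} (hK : IsCompact K)
    (hKU : K ⊆ {z | 0 < z.im}) :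
    ∃ F : ℂ → ℂ, DifferentiableOn ℂ F K ∧ EqOn (fun z ↦ (F z).re) u K := by
  obtain ⟨c, r, hKB, hBU⟩ := hK.exists_ball_subset_upperHalfPlane hKU
  obtain ⟨F, hF, hFu⟩ := (hu.mono hBU).exists_analyticOnNhd_ball_re_eq
  exact ⟨F, hF.differentiableOn.mono hKB, hFu.mono hKB⟩

noncomputable def damping (ζ : ℂ) : ℂ := ζ / (ζ + I) ^ 3

theorem normSq_add_I (ζ : ℂ) : normSq (ζ + I) = normSq ζ + 2 * ζ.im + 1 := by
  simp [normSq_apply]; ring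

section damping

variable {ζ : ℂ}

theorem one_le_norm_add_I (hζ : 0 ≤ ζ.im) : 1 ≤ ‖ζ + I‖ := by
  rw [← Real.sqrt_one, norm_def]
  exact Real.sqrt_le_sqrt (by rw [normSq_add_I]; linarith [normSq_nonneg ζ])

theorem add_I_ne_zero (hζ : 0 ≤ ζ.im) : ζ + I ≠ 0 :=
  norm_pos_iff.1 (zero_lt_one.trans_le (one_le_norm_add_I hζ))

theorem norm_le_norm_add_I (hζ : 0 ≤ ζ.im) : ‖ζ‖ ≤ ‖ζ + I‖ := by
  rw [norm_def, norm_def]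
  exact Real.sqrt_le_sqrt (by rw [normSq_add_I]; linarith)

theorem norm_damping_le_norm (hζ : 0 ≤ ζ.im) : ‖damping ζ‖ ≤ ‖ζ‖ := by
  rw [damping, norm_div, norm_pow]
  exact div_le_self (norm_nonneg ζ) (one_le_pow₀ (one_le_norm_add_I hζ))

theorem norm_damping_le_inv_sq (hζ : 0 ≤ ζ.im) : ‖damping ζ‖ ≤ (‖ζ‖ ^ 2)⁻¹ := by
  rcases eq_or_ne ζ 0 with rfl | hζ0
  · simp [damping]
  have h0 : 0 < ‖ζ‖ := norm_pos_iff.2 hζ0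
  have h1 : 0 < ‖ζ + I‖ := zero_lt_one.trans_le (one_le_norm_add_I hζ)
  rw [damping, norm_div, norm_pow, div_le_iff₀ (by positivity), inv_mul_eq_div,
    le_div_iff₀ (by positivity)]
  calc ‖ζ‖ * ‖ζ‖ ^ 2 = ‖ζ‖ ^ 3 := by ring
    _ ≤ ‖ζ + I‖ ^ 3 := pow_le_pow_left₀ h0.le (norm_le_norm_add_I hζ) 3

theorem norm_damping_le_one (hζ : 0 ≤ ζ.im) : ‖damping ζ‖ ≤ 1 := by
  have h1 := one_le_norm_add_I hζ
  rw [damping, norm_div, norm_pow]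
  exact div_le_one_of_le₀ ((norm_le_norm_add_I hζ).trans (le_self_pow₀ h1 (by norm_num)))
    (by positivity)

theorem damping_ne_zero (hζ : 0 < ζ.im) : damping ζ ≠ 0 :=
  div_ne_zero (fun h ↦ by simp [h] at hζ) (pow_ne_zero _ (add_I_ne_zero hζ.le))

theorem mul_norm_damping_le_one (hζ : 0 ≤ ζ.im) {E : ℝ} (hE : 0 < E)
    (h : ‖ζ‖ ≤ E⁻¹ ∨ 1 + E ≤ ‖ζ‖) : E * ‖damping ζ‖ ≤ 1 := by
  rcases h with hsmall | hlarge
  · calc E * ‖damping ζ‖ ≤ E * E⁻¹ := by gcongr; exact (norm_damping_le_norm hζ).trans hsmall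
      _ = 1 := mul_inv_cancel₀ hE.ne'
  · calc E * ‖damping ζ‖ ≤ E * (‖ζ‖ ^ 2)⁻¹ := by gcongr; exact norm_damping_le_inv_sq hζ
      _ ≤ 1 := by
        rw [← div_eq_mul_inv, div_le_one (by nlinarith)]
        nlinarith

end damping

theorem differentiableOn_damping :
    DifferentiableOn ℂ damping {ζ : ℂ | 0 ≤ ζ.im} := fun ζ hζ ↦ by
  refine (differentiableAt_id.div (by fun_prop) ?_).differentiableWithinAt
  exact pow_ne_zero _ (add_I_ne_zero hζ)

theorem norm_exp_mul_damping (t : ℝ) (F : ℂ → ℂ) (b : ℝ) (z : ℂ) :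
    ‖Complex.exp (t * F z) * damping (z - b)‖ = Real.exp (t * (F z).re) * ‖damping (z - b)‖ := by
  rw [norm_mul, norm_exp, re_ofReal_mul]

theorem exp_mul_re_mul_norm_damping_le {Ω : Set ℂ} (hΩ : Bornology.IsBounded Ω)
    (hΩU : closure Ω ⊆ {z | 0 ≤ z.im}) {F : ℂ → ℂ} (hF : DifferentiableOn ℂ F (closure Ω))
    {b t η : ℝ} (ht : 0 ≤ t) (hη : 0 ≤ η)
    (hfront : ∀ z ∈ frontier Ω,
      (F z).re ≤ η ∨ Real.exp (t * (F z).re) * ‖damping (z - b)‖ ≤ 1)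
    {z₀ : ℂ} (hz₀ : z₀ ∈ closure Ω) :
    Real.exp (t * (F z₀).re) * ‖damping (z₀ - b)‖ ≤ Real.exp (t * η) := by
  have hG : DifferentiableOn ℂ (fun z ↦ Complex.exp (t * F z) * damping (z - b)) (closure Ω) :=
    ((hF.const_mul _).cexp).mul <| differentiableOn_damping.comp (by fun_prop)
      fun z hz ↦ by simpa using hΩU hz
  simp_rw [← norm_exp_mul_damping]
  refine norm_le_of_forall_mem_frontier_norm_le hΩ hG.diffContOnCl (fun z hz ↦ ?_) hz₀
  have him : 0 ≤ (z - b).im := by simpa using hΩU (frontier_subset_closure hz)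
  have hη1 : 1 ≤ Real.exp (t * η) := Real.one_le_exp (mul_nonneg ht hη)
  rw [norm_exp_mul_damping]
  rcases hfront z hz with hFη | hsmall
  · calc Real.exp (t * (F z).re) * ‖damping (z - b)‖ ≤ Real.exp (t * η) * 1 := by
          gcongr
          exact norm_damping_le_one him
      _ = Real.exp (t * η) := mul_one _
  · exact hsmall.trans hη1

theorem exp_mul_mul_norm_damping_le_of_frontier {u : ℂ → ℝ}
    (hu : HarmonicOnNhd u {z | 0 < z.im}) {Ω : Set ℂ} (hΩ : Bornology.IsBounded Ω)
    (hΩU : closure Ω ⊆ {z | 0 < z.im}) {b t η : ℝ} (ht : 0 ≤ t) (hη : 0 ≤ η)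
    (hfront : ∀ z ∈ frontier Ω, u z ≤ η ∨ Real.exp (t * u z) * ‖damping (z - b)‖ ≤ 1)
    {z₀ : ℂ} (hz₀ : z₀ ∈ closure Ω) :
    Real.exp (t * u z₀) * ‖damping (z₀ - b)‖ ≤ Real.exp (t * η) := by
  obtain ⟨F, hF, hFu⟩ :=
    exists_differentiableOn_re_eq_of_harmonicOnNhd hu hΩ.isCompact_closure hΩU
  have hFu' : ∀ z ∈ closure Ω, (F z).re = u z := hFu
  rw [← hFu' z₀ hz₀]
  refine exp_mul_re_mul_norm_damping_le hΩ (fun z hz ↦ (show 0 < z.im from hΩU hz).le) hF ht hη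
    (fun z hz ↦ ?_) hz₀
  rw [hFu' z (frontier_subset_closure hz)]
  exact hfront z hz

theorem mem_reProdIm_Ioo_of_norm_sub_lt {b S δ : ℝ} {z : ℂ} (hS : ‖z - b‖ < S) (hδ : δ < z.im) :
    z ∈ Ioo (b - S) (b + S) ×ℂ Ioo δ S := by
  have hre := abs_lt.1 ((abs_re_le_norm (z - b)).trans_lt hS)
  have him := (le_abs_self _).trans_lt ((abs_im_le_norm (z - b)).trans_lt hS)
  simp only [sub_re, sub_im, ofReal_re, ofReal_im, sub_zero] at hre him
  exact ⟨⟨by linarith, by linarith⟩, hδ, him⟩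

theorem exists_pos_forall_le_add_of_continuousOn_reProdIm {u : ℂ → ℝ} {K : Set ℝ}
    (hK : IsCompact K) (hu : ContinuousOn u (K ×ℂ Icc 0 1)) {η : ℝ} (hη : 0 < η) :
    ∃ δ : ℝ, 0 < δ ∧ ∀ x ∈ K, ∀ y ∈ Icc 0 δ, u (x + y * I) ≤ u x + η := by
  obtain ⟨ε, hε, hεu⟩ := uniformContinuousOn_iff.1
    ((hK.reProdIm isCompact_Icc).uniformContinuousOn_of_continuous hu) η hη
  refine ⟨min (ε / 2) 1, by positivity, fun x hx y hy ↦ ?_⟩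
  have hyε : y < ε := hy.2.trans_lt ((min_le_left _ _).trans_lt (half_lt_self hε))
  have hmem : ∀ {y : ℝ}, y ∈ Icc (0 : ℝ) (min (ε / 2) 1) → (x + y * I : ℂ) ∈ K ×ℂ Icc 0 1 :=
    fun hy ↦ by simpa [mem_reProdIm, hx] using ⟨hy.1, hy.2.trans (min_le_right _ _)⟩
  have hdist : dist (x + y * I : ℂ) x < ε := by
    simpa [Complex.dist_eq, abs_of_nonneg hy.1] using hyε
  have := hεu _ (hmem hy) _ (by simpa using hmem ⟨le_rfl, by positivity⟩) hdist
  linarith [(abs_lt.1 (Real.dist_eq _ _ ▸ this)).2]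

theorem im_eq_or_le_norm_sub_of_mem_frontier_reProdIm {b S δ : ℝ} (hδ : 0 ≤ δ) (hδS : δ < S) {z : ℂ}
    (hz : z ∈ frontier (Ioo (b - S) (b + S) ×ℂ Ioo δ S)) :
    (z.im = δ ∧ |z.re - b| ≤ S) ∨ S ≤ ‖z - b‖ := by
  have hS : 0 < S := hδ.trans_lt hδS
  rw [frontier_reProdIm, closure_Ioo (by linarith), closure_Ioo hδS.ne,
    frontier_Ioo hδS, frontier_Ioo (by linarith)] at hz
  rcases hz with ⟨hre, him⟩ | ⟨hre, him⟩
  · rcases him with him | him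
    · exact Or.inl ⟨him, abs_sub_le_iff.2 ⟨by linarith [hre.2], by linarith [hre.1]⟩⟩
    · right
      calc S = |(z - b).im| := by simp [show z.im = S from him, abs_of_pos hS]
        _ ≤ ‖z - b‖ := abs_im_le_norm _
  · right
    calc S = |(z - b).re| := by rcases hre with h | h <;> simp [show z.re = _ from h, abs_of_pos hS]
      _ ≤ ‖z - b‖ := abs_re_le_norm _

theorem le_of_forall_exp_mul_mul_le {a b c : ℝ} (hc : 0 < c)
    (h : ∀ t : ℝ, 0 ≤ t → Real.exp (t * a) * c ≤ Real.exp (t * b)) : a ≤ b := by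
  by_contra! hba
  set t := (|Real.log c| + 1) / (a - b)
  have ht : t * (a - b) = |Real.log c| + 1 := div_mul_cancel₀ _ (sub_pos.2 hba).ne'
  have hlog := Real.log_le_log (by positivity) (h t (by positivity))
  rw [Real.log_mul (Real.exp_pos _).ne' hc.ne', Real.log_exp, Real.log_exp] at hlog
  linarith [neg_abs_le (Real.log c)]

theorem le_or_mul_norm_damping_le_one_of_mem_frontier {u : ℂ → ℝ} {b E η δ L S : ℝ}
    (hE : 0 < E) (hδ : 0 < δ) (hδL : δ ≤ L) (hδS : δ < S) (hLE : L + L = E⁻¹) (hS : 1 + E ≤ S)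
    (hbot : ∀ x : ℝ, |x - b| ≤ S → L ≤ |x - b| → u (x + δ * I) ≤ η) {z : ℂ}
    (hz : z ∈ frontier (Ioo (b - S) (b + S) ×ℂ Ioo δ S)) :
    u z ≤ η ∨ E * ‖damping (z - b)‖ ≤ 1 := by
  have hzδ : δ ≤ z.im := by
    have := frontier_subset_closure hz
    rw [closure_reProdIm, closure_Ioo (by linarith), closure_Ioo hδS.ne] at this
    exact this.2.1
  have him : 0 ≤ (z - b).im := by simpa using hδ.le.trans hzδ
  rcases im_eq_or_le_norm_sub_of_mem_frontier_reProdIm hδ.le hδS hz with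
    ⟨hzim, hre⟩ | hfar
  · by_cases hLz : L ≤ |z.re - b|
    · left
      simpa [← hzim, re_add_im] using hbot z.re hre hLz
    · refine Or.inr (mul_norm_damping_le_one him hE (Or.inl ?_))
      calc ‖z - b‖ ≤ |(z - b).re| + |(z - b).im| := norm_le_abs_re_add_abs_im _
        _ ≤ L + L := by
          simp only [sub_re, sub_im, ofReal_re, ofReal_im, sub_zero, hzim, abs_of_pos hδ]
          linarith
        _ = E⁻¹ := hLE
  · exact Or.inr (mul_norm_damping_le_one him hE (Or.inr (hS.trans hfar)))

theorem exp_mul_mul_norm_damping_le_of_harmonicOnNhd {u : ℂ → ℝ} {b M : ℝ}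
    (hu : HarmonicOnNhd u {z | 0 < z.im}) (hM : ∀ z : ℂ, 0 < z.im → u z ≤ M)
    (hcont : ContinuousOn u ({z : ℂ | 0 ≤ z.im} \ {(b : ℂ)}))
    (hbdry : ∀ x : ℝ, x ≠ b → u x ≤ 0) {t η : ℝ} (ht : 0 ≤ t) (hη : 0 < η)
    {z₀ : ℂ} (hz₀ : 0 < z₀.im) :
    Real.exp (t * u z₀) * ‖damping (z₀ - b)‖ ≤ Real.exp (t * η) := by
  -- `E` bounds `exp (t * u)`; `damping (z - b)` compensates it within `2 * L` of `b` and
  -- beyond distance `S` from `b`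
  set E := Real.exp (t * M)
  have hE : 0 < E := Real.exp_pos _
  set L := E⁻¹ / 2
  have hL : 0 < L := by positivity
  set S := 1 + E + ‖z₀ - b‖
  set K := Icc (b - S) (b + S) \ Ioo (b - L) (b + L)
  have hKu : ContinuousOn u (K ×ℂ Icc 0 1) := hcont.mono fun z hz ↦ by
    refine ⟨hz.2.1, fun hzb ↦ hz.1.2 ?_⟩
    rw [mem_singleton_iff.1 hzb, ofReal_re]
    exact ⟨by linarith, by linarith⟩
  obtain ⟨δ₁, hδ₁, hδ₁u⟩ := exists_pos_forall_le_add_of_continuousOn_reProdIm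
    (isCompact_Icc.diff isOpen_Ioo) hKu hη
  set δ := min δ₁ (min L (z₀.im / 2))
  have hδ : 0 < δ := by positivity
  have hδz₀ : δ < z₀.im :=
    (min_le_right _ _).trans_lt ((min_le_right _ _).trans_lt (half_lt_self hz₀))
  have hz₀S : ‖z₀ - b‖ < S := by linarith
  have hδS : δ < S := by linarith [show z₀.im ≤ ‖z₀ - b‖ by simpa using im_le_norm (z₀ - b)]
  have hΩ : closure (Ioo (b - S) (b + S) ×ℂ Ioo δ S) ⊆ {z | 0 < z.im} := by
    rw [closure_reProdIm, closure_Ioo (by linarith), closure_Ioo hδS.ne]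
    exact fun z hz ↦ hδ.trans_le hz.2.1
  refine exp_mul_mul_norm_damping_le_of_frontier hu
    ((isBounded_Ioo _ _).reProdIm (isBounded_Ioo _ _)) hΩ ht hη.le (fun z hz ↦ ?_)
    (subset_closure (mem_reProdIm_Ioo_of_norm_sub_lt hz₀S hδz₀))
  -- away from `b` the bottom edge is close to the real line, where `u ≤ 0`
  have hbot : ∀ x : ℝ, |x - b| ≤ S → L ≤ |x - b| → u (x + δ * I) ≤ η := fun x hxS hxL ↦ by
    have hxK : x ∈ K := ⟨⟨by linarith [(abs_le.1 hxS).1], by linarith [(abs_le.1 hxS).2]⟩,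
      fun h ↦ hxL.not_gt (abs_sub_lt_iff.2 ⟨by linarith [h.2], by linarith [h.1]⟩)⟩
    have hxb : x ≠ b := fun h ↦ hxL.not_gt (by simpa [h] using hL)
    linarith [hδ₁u x hxK δ ⟨hδ.le, min_le_left _ _⟩, hbdry x hxb]
  refine (le_or_mul_norm_damping_le_one_of_mem_frontier hE hδ
    ((min_le_right _ _).trans (min_le_left _ _)) hδS (add_halves _)
    (by linarith [norm_nonneg (z₀ - b)]) hbot hz).imp_right fun h ↦ le_trans ?_ h
  gcongr
  exact Real.exp_le_exp.2 (mul_le_mul_of_nonneg_left (hM z (hΩ (frontier_subset_closure hz))) ht)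

theorem nonpos_of_harmonicOnNhd_upperHalfPlane {u : ℂ → ℝ} {b M : ℝ}
    (hu : HarmonicOnNhd u {z | 0 < z.im}) (hM : ∀ z : ℂ, 0 < z.im → u z ≤ M)
    (hcont : ContinuousOn u ({z : ℂ | 0 ≤ z.im} \ {(b : ℂ)}))
    (hbdry : ∀ x : ℝ, x ≠ b → u x ≤ 0) {z : ℂ} (hz : 0 < z.im) : u z ≤ 0 := by
  refine le_of_forall_pos_le_add fun η hη ↦ ?_
  rw [zero_add]
  have hd : 0 < ‖damping (z - b)‖ := norm_pos_iff.2 (damping_ne_zero (by simpa using hz))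
  exact le_of_forall_exp_mul_mul_le hd fun t ht ↦
    exp_mul_mul_norm_damping_le_of_harmonicOnNhd hu hM hcont hbdry ht hη hz

theorem eqOn_of_harmonicOnNhd_upperHalfPlane {f g : ℂ → ℝ} {b : ℝ}
    (hf : HarmonicOnNhd f {z | 0 < z.im}) (hg : HarmonicOnNhd g {z | 0 < z.im})
    (hfM : ∃ M, ∀ z : ℂ, 0 < z.im → |f z| ≤ M) (hgM : ∃ M, ∀ z : ℂ, 0 < z.im → |g z| ≤ M)
    (hfc : ContinuousOn f ({z : ℂ | 0 ≤ z.im} \ {(b : ℂ)}))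
    (hgc : ContinuousOn g ({z : ℂ | 0 ≤ z.im} \ {(b : ℂ)}))
    (hfg : ∀ x : ℝ, x ≠ b → f x = g x) : EqOn f g {z | 0 < z.im} := by
  obtain ⟨Mf, hMf⟩ := hfM
  obtain ⟨Mg, hMg⟩ := hgM
  have hM : ∀ z : ℂ, 0 < z.im → |(f - g) z| ≤ Mf + Mg := fun z hz ↦
    (abs_sub _ _).trans (add_le_add (hMf z hz) (hMg z hz))
  intro z hz
  have hle := nonpos_of_harmonicOnNhd_upperHalfPlane (hf.sub hg)
    (fun z hz ↦ (le_abs_self _).trans (hM z hz)) (hfc.sub hgc)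
    (fun x hx ↦ (sub_eq_zero.2 (hfg x hx)).le) hz
  have hge := nonpos_of_harmonicOnNhd_upperHalfPlane (hf.sub hg).neg
    (fun z hz ↦ (neg_le_abs _).trans (hM z hz)) (hfc.sub hgc).neg
    (fun x hx ↦ by simp [hfg x hx]) hz
  simp only [Pi.sub_apply, Pi.neg_apply] at hle hge
  linarith

theorem continuousOn_arg_of_im_nonneg : ContinuousOn arg ({z : ℂ | 0 ≤ z.im} \ {0}) := by
  rintro z ⟨him, hz0⟩
  by_cases hz : z ∈ slitPlane
  · exact (continuousAt_arg hz).continuousWithinAt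
  · rw [mem_slitPlane_iff, not_or, not_lt, not_not] at hz
    have hre : z.re < 0 := hz.1.lt_of_ne fun h ↦ hz0 (ext h hz.2)
    exact (continuousWithinAt_arg_of_re_neg_of_im_zero hre hz.2).mono sdiff_subset

noncomputable def halfLineHarmonicMeasure (b : ℝ) (z : ℂ) : ℝ := 1 - (1 / π) * (z - b).arg

section halfLineHarmonicMeasure

variable {b : ℝ}

theorem halfLineHarmonicMeasure_eq_re (z : ℂ) :
    halfLineHarmonicMeasure b z = (1 + log (z - b) * I / π).re := by
  rw [halfLineHarmonicMeasure, add_re, one_re, div_ofReal_re, mul_I_re, log_im]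
  ring

theorem harmonicOnNhd_halfLineHarmonicMeasure :
    InnerProductSpace.HarmonicOnNhd (halfLineHarmonicMeasure b) {z | 0 < z.im} := fun z hz ↦ by
  have hslit : z - b ∈ slitPlane := Or.inr (by simpa using hz.ne')
  rw [funext halfLineHarmonicMeasure_eq_re]
  exact (analyticAt_const.add
    (((analyticAt_id.sub analyticAt_const).clog hslit).mul analyticAt_const |>.div
      analyticAt_const (by simp [Real.pi_ne_zero]))).harmonicAt_re

theorem continuousOn_halfLineHarmonicMeasure :
    ContinuousOn (halfLineHarmonicMeasure b) ({z : ℂ | 0 ≤ z.im} \ {(b : ℂ)}) := by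
  refine continuousOn_const.sub (continuousOn_const.mul
    (continuousOn_arg_of_im_nonneg.comp (by fun_prop) fun z hz ↦ ?_))
  exact ⟨by simpa using hz.1, fun h ↦ hz.2 (sub_eq_zero.1 h)⟩

theorem abs_halfLineHarmonicMeasure_le_one {z : ℂ} (hz : 0 ≤ z.im) :
    |halfLineHarmonicMeasure b z| ≤ 1 := by
  have h0 : 0 ≤ (z - b).arg := arg_nonneg_iff.2 (by simpa using hz)
  have hπ : (1 / π) * (z - b).arg ≤ 1 := by
    rw [one_div, inv_mul_le_one₀ Real.pi_pos]; exact arg_le_pi _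
  have hπ0 : 0 ≤ (1 / π) * (z - b).arg := by positivity
  rw [halfLineHarmonicMeasure, abs_le]
  constructor <;> linarith

theorem halfLineHarmonicMeasure_ofReal_eq_one {x : ℝ} (hx : b < x) :
    halfLineHarmonicMeasure b x = 1 := by
  rw [halfLineHarmonicMeasure, ← ofReal_sub, arg_ofReal_of_nonneg (by linarith)]
  ring

theorem halfLineHarmonicMeasure_ofReal_eq_zero {x : ℝ} (hx : x < b) :
    halfLineHarmonicMeasure b x = 0 := by
  rw [halfLineHarmonicMeasure, ← ofReal_sub, arg_ofReal_of_neg (by linarith)]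
  field_simp
  ring

end halfLineHarmonicMeasure

theorem harmonic_measure_halfline (b : ℝ) (h : ℂ → ℝ)
    (hharm : IsHarmonicOn h {z : ℂ | 0 < z.im})
    (hbdd : ∃ M : ℝ, ∀ z ∈ {z : ℂ | 0 < z.im}, |h z| ≤ M)
    (hcont : ContinuousOn h ({z : ℂ | 0 ≤ z.im} \ {(b : ℂ)}))
    (hgt : ∀ x : ℝ, b < x → h x = 1)
    (hlt : ∀ x : ℝ, x < b → h x = 0) :
    ∀ z : ℂ, 0 < z.im → h z = 1 - (1 / π) * (z - b).arg := by
  intro z hz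
  refine eqOn_of_harmonicOnNhd_upperHalfPlane
    (hharm.harmonicOnNhd (isOpen_lt continuous_const continuous_im))
    harmonicOnNhd_halfLineHarmonicMeasure hbdd
    ⟨1, fun z hz ↦ abs_halfLineHarmonicMeasure_le_one hz.le⟩
    hcont continuousOn_halfLineHarmonicMeasure (fun x hx ↦ ?_) hz
  rcases hx.lt_or_gt with hxb | hxb
  · rw [hlt x hxb, halfLineHarmonicMeasure_ofReal_eq_zero hxb]
  · rw [hgt x hxb, halfLineHarmonicMeasure_ofReal_eq_one hxb]
end
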